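/- arXiv:2104.08928 — 2 statements merged into one kernel-verified Lean document; each statement's English description precedes it below -/
import Mathlib

section
/- For every positive integer n, the Gamma function satisfies n/√(n+1) ≤ √2·Γ((n+1)/2)/Γ(n/2) ≤ √n. -/
open MeasureTheory ProbabilityTheory Real
open scoped Matrix
open scoped BigOperators ENNReal NNReal

noncomputable section

/-- Euclidean norm of a finitely-indexed real vector. -/
def enorm2 {ι : Type*} [Fintype ι] (v : ι → ℝ) : ℝ := Real.sqrt (∑ i, v i ^ 2)

/-- Frobenius norm of a matrix. -/
def frob {m k : Type*} [Fintype m] [Fintype k] (M : Matrix m k ℝ) : ℝ :=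
  Real.sqrt (∑ i, ∑ j, M i j ^ 2)

/-- The `(2,1)`-norm of a matrix: the sum of the Euclidean norms of its rows. -/
def norm21 {m k : Type*} [Fintype m] [Fintype k] (M : Matrix m k ℝ) : ℝ :=
  ∑ i, enorm2 (M i)

/-- Frobenius (entrywise) inner product of two matrices. -/
def mdot {m k : Type*} [Fintype m] [Fintype k] (M N : Matrix m k ℝ) : ℝ :=
  ∑ i, ∑ j, M i j * N i j

/-- Euclidean dot product. -/
def vdot {ι : Type*} [Fintype ι] (u v : ι → ℝ) : ℝ := ∑ i, u i * v i

/-- The linear operator `𝒜 : ℝ^{d×d} → ℝ^n` determined by sensing matrices `A`. -/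
def opApply {n d : ℕ} (A : Fin n → Matrix (Fin d) (Fin d) ℝ)
    (Θ : Matrix (Fin d) (Fin d) ℝ) : Fin n → ℝ :=
  fun i => mdot (A i) Θ

/-- The adjoint `𝒜*(ε) = ∑ i, ε i • A i`. -/
def adjOp {n d : ℕ} (A : Fin n → Matrix (Fin d) (Fin d) ℝ) (e : Fin n → ℝ) :
    Matrix (Fin d) (Fin d) ℝ :=
  Matrix.of fun l k => ∑ i, e i * A i l k

/-- The matrix `A^j ∈ ℝ^{n×d}` stacking the `j`-th rows of the sensing matrices. -/
def rowStack {n d : ℕ} (A : Fin n → Matrix (Fin d) (Fin d) ℝ) (j : Fin d) :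
    Matrix (Fin n) (Fin d) ℝ :=
  Matrix.of fun i l => A i j l

/-- Largest singular value of a matrix. -/
def sigmaMax {m k : Type*} [Fintype m] [Fintype k] (U : Matrix m k ℝ) : ℝ :=
  sSup {c | ∃ x : k → ℝ, enorm2 x = 1 ∧ c = enorm2 (U.mulVec x)}

/-- Smallest singular value of a (tall) `d × r` matrix (`σ_r`). -/
def sigmaMin {m k : Type*} [Fintype m] [Fintype k] (U : Matrix m k ℝ) : ℝ :=
  sInf {c | ∃ x : k → ℝ, enorm2 x = 1 ∧ c = enorm2 (U.mulVec x)}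

/-- Orthogonal matrix. -/
def IsOrth {r : ℕ} (R : Matrix (Fin r) (Fin r) ℝ) : Prop :=
  R * Rᵀ = 1 ∧ Rᵀ * R = 1

/-- `R` is an orthogonal matrix minimizing the Frobenius distance `‖Û − U⋆R‖_F`
over orthogonal matrices. -/
def IsAligner {d r : ℕ} (Uhat Ustar : Matrix (Fin d) (Fin r) ℝ)
    (R : Matrix (Fin r) (Fin r) ℝ) : Prop :=
  IsOrth R ∧ ∀ R' : Matrix (Fin r) (Fin r) ℝ, IsOrth R' →
    frob (Uhat - Ustar * R) ≤ frob (Uhat - Ustar * R')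

/-- Restricted strong convexity RSC(U⋆, η, τ). -/
def RSC {n d r : ℕ} (A : Fin n → Matrix (Fin d) (Fin d) ℝ)
    (U : Matrix (Fin d) (Fin r) ℝ) (η τ : ℝ) : Prop :=
  ∀ Δ : Matrix (Fin d) (Fin r) ℝ,
    (1 / (n : ℝ)) * enorm2 (opApply A (Δ * Uᵀ + U * Δᵀ + Δ * Δᵀ)) ^ 2 ≥
      η * frob (Δ * Uᵀ + U * Δᵀ + Δ * Δᵀ) ^ 2
        - τ * (Real.sqrt ((r : ℝ) / n) + Real.sqrt (Real.log d / n)) ^ 2 * norm21 Δ ^ 2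

/-- Quadratic compatibility condition QCC(U⋆, κ) with index set `J`. -/
def QCC {n d r : ℕ} (A : Fin n → Matrix (Fin d) (Fin d) ℝ)
    (U : Matrix (Fin d) (Fin r) ℝ) (J : Finset (Fin d)) (κ : ℝ) : Prop :=
  ∀ Δ : Matrix (Fin d) (Fin r) ℝ,
    (∑ j ∈ Jᶜ, enorm2 (Δ j)) ≤ 7 * ∑ j ∈ J, enorm2 (Δ j) →
    (1 / (n : ℝ)) * enorm2 (opApply A (Δ * Uᵀ + U * Δᵀ + Δ * Δᵀ)) ^ 2 ≥
      (κ / (J.card : ℝ)) * (∑ j ∈ J, enorm2 (Δ j)) ^ 2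

/-- `r`-restricted well-conditionedness RWC(α, β). -/
def RWC {n d : ℕ} (A : Fin n → Matrix (Fin d) (Fin d) ℝ) (rk : ℕ) (α β : ℝ) : Prop :=
  3 * α > 2 * β ∧
  ∀ Z : Matrix (Fin d) (Fin d) ℝ, Z.rank ≤ rk →
    α * frob Z ^ 2 ≤ (1 / (n : ℝ)) * enorm2 (opApply A Z) ^ 2 ∧
    (1 / (n : ℝ)) * enorm2 (opApply A Z) ^ 2 ≤ β * frob Z ^ 2

/-- `r`-smoothness(β). -/
def RSmooth {n d : ℕ} (A : Fin n → Matrix (Fin d) (Fin d) ℝ) (rk : ℕ) (β : ℝ) : Prop :=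
  ∀ Z : Matrix (Fin d) (Fin d) ℝ, Z.rank ≤ rk →
    (1 / (n : ℝ)) * enorm2 (opApply A Z) ^ 2 ≤ β * frob Z ^ 2

/-- A real random variable `z` is `σ`-subgaussian. -/
def Subg {Ω : Type*} [MeasurableSpace Ω] (μ : Measure Ω) (z : Ω → ℝ) (σ : ℝ) : Prop :=
  ∀ t : ℝ, ∫ ω, Real.exp (t * z ω) ∂μ ≤ Real.exp (t ^ 2 * σ ^ 2 / 2)

/-- The matrix `Ψ_j = U⋆ᵀ (A^{jT} A^j / n) U⋆`. -/
def PsiMat {n d r : ℕ} (A : Fin n → Matrix (Fin d) (Fin d) ℝ)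
    (U : Matrix (Fin d) (Fin r) ℝ) (j : Fin d) : Matrix (Fin r) (Fin r) ℝ :=
  Uᵀ * ((1 / (n : ℝ)) • ((rowStack A j)ᵀ * rowStack A j)) * U

/-- The matrix `Φ_j`, i.e. `Ψ_j` for the transposed sensing matrices. -/
def PhiMat {n d r : ℕ} (A : Fin n → Matrix (Fin d) (Fin d) ℝ)
    (U : Matrix (Fin d) (Fin r) ℝ) (j : Fin d) : Matrix (Fin r) (Fin r) ℝ :=
  PsiMat (fun i => (A i)ᵀ) U j

end

lemma gamma_sq_le (x : ℝ) (hx : 0 < x) :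
    Real.Gamma (x + 1/2) ^ 2 ≤ Real.Gamma x * Real.Gamma (x + 1) := by
  have h := Real.convexOn_log_Gamma.2 (Set.mem_Ioi.mpr hx)
    (Set.mem_Ioi.mpr (by linarith : (0:ℝ) < x + 1))
    (by norm_num : (0:ℝ) ≤ 1/2) (by norm_num : (0:ℝ) ≤ 1/2) (by norm_num)
  simp only [smul_eq_mul, Function.comp_apply] at h
  have hmid : 1/2 * x + 1/2 * (x + 1) = x + 1/2 := by ring
  rw [hmid] at h
  have h2 : 0 < Real.Gamma x := Real.Gamma_pos_of_pos hx
  have h3 : 0 < Real.Gamma (x + 1) := Real.Gamma_pos_of_pos (by linarith)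
  have : Real.log (Real.Gamma (x + 1/2) ^ 2) ≤ Real.log (Real.Gamma x * Real.Gamma (x + 1)) := by
    rw [Real.log_pow, Real.log_mul h2.ne' h3.ne']
    push_cast; linarith
  exact (Real.log_le_log_iff (by positivity) (by positivity)).mp this

/-- Gamma function inequality `n/√(n+1) ≤ √2·Γ((n+1)/2)/Γ(n/2) ≤ √n`. -/
theorem stmt_13 (n : ℕ) (hn : 0 < n) :
    (n : ℝ) / Real.sqrt ((n : ℝ) + 1)
        ≤ Real.sqrt 2 * (Real.Gamma (((n : ℝ) + 1) / 2) / Real.Gamma ((n : ℝ) / 2)) ∧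
      Real.sqrt 2 * (Real.Gamma (((n : ℝ) + 1) / 2) / Real.Gamma ((n : ℝ) / 2))
        ≤ Real.sqrt n := by
  have hn' : (0:ℝ) < n := by exact_mod_cast hn
  set a := Real.Gamma ((n : ℝ) / 2) with ha_def
  set b := Real.Gamma (((n : ℝ) + 1) / 2) with hb_def
  have ha : 0 < a := Real.Gamma_pos_of_pos (by positivity)
  have hb : 0 < b := Real.Gamma_pos_of_pos (by positivity)
  have hG1 : Real.Gamma ((n : ℝ) / 2 + 1) = (n : ℝ) / 2 * a :=
    Real.Gamma_add_one (by positivity)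
  have hG2 : Real.Gamma (((n : ℝ) + 1) / 2 + 1) = ((n : ℝ) + 1) / 2 * b :=
    Real.Gamma_add_one (by positivity)
  -- (1): b^2 ≤ (n/2) a^2
  have h1 : b ^ 2 ≤ (n : ℝ) / 2 * a ^ 2 := by
    have := gamma_sq_le ((n : ℝ) / 2) (by positivity)
    rw [hG1] at this
    have he : (n : ℝ) / 2 + 1 / 2 = ((n : ℝ) + 1) / 2 := by ring
    rw [he] at this
    nlinarith
  -- (2): (n/2)^2 a^2 ≤ ((n+1)/2) b^2
  have h2 : ((n : ℝ) / 2) ^ 2 * a ^ 2 ≤ ((n : ℝ) + 1) / 2 * b ^ 2 := by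
    have := gamma_sq_le (((n : ℝ) + 1) / 2) (by positivity)
    rw [hG2] at this
    have he : ((n : ℝ) + 1) / 2 + 1 / 2 = (n : ℝ) / 2 + 1 := by ring
    rw [he, hG1] at this
    nlinarith
  have hba : 0 ≤ b / a := by positivity
  have key : Real.sqrt 2 * (b / a) = Real.sqrt (2 * (b / a) ^ 2) := by
    rw [Real.sqrt_mul (by norm_num), Real.sqrt_sq hba]
  constructor
  · have lhs_eq : (n : ℝ) / Real.sqrt ((n : ℝ) + 1)
        = Real.sqrt ((n : ℝ) ^ 2 / ((n : ℝ) + 1)) := by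
      rw [Real.sqrt_div (by positivity), Real.sqrt_sq hn'.le]
    rw [lhs_eq, key]
    apply Real.sqrt_le_sqrt
    rw [div_le_iff₀ (by positivity : (0:ℝ) < (n:ℝ) + 1), div_pow]
    have he : 2 * (b ^ 2 / a ^ 2) * ((n : ℝ) + 1) = 2 * b ^ 2 * ((n : ℝ) + 1) / a ^ 2 := by
      ring
    rw [he, le_div_iff₀ (by positivity)]
    nlinarith
  · rw [key]
    apply Real.sqrt_le_sqrt
    rw [div_pow]
    have he : 2 * (b ^ 2 / a ^ 2) = 2 * b ^ 2 / a ^ 2 := by ring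
    rw [he, div_le_iff₀ (by positivity)]
    nlinarith
end

section
/- Let 𝒜 : ℝ^{d×d} → ℝ^n be a linear operator given by matrices A₁,…,A_n satisfying 1-smoothness(β), and let U* ∈ ℝ^{d×r}. For each j ∈ [d], let A^j ∈ ℝ^{n×d} be the matrix whose i-th row is the j-th row of A_i, and define Ψ_j = U*ᵀ(A^{jT}A^j/n)U* ∈ ℝ^{r×r}. Then the operator norm satisfies ‖Ψ_j‖ ≤ β·σ₁(U*)², where σ₁(U*) is the largest singular value of U*. -/
/-!
Over `ℝ`, `Ψ_j = Bᵀ B` with `B = n^{-1/2} A^j U⋆`, so the C⋆-identity gives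
`‖Ψ_j‖ = ‖B‖² ≤ ‖n^{-1/2} A^j‖² σ₁(U⋆)²`. Smoothness tested on the rank-one matrix `e_j wᵀ`, which
`𝒜` maps to `A^j w`, bounds `‖n^{-1/2} A^j w‖² ≤ β ‖w‖²`; with `w = e_j` this also forces `β ≥ 0`.
-/

open MeasureTheory ProbabilityTheory Real
open scoped Matrix
open scoped BigOperators ENNReal NNReal

open scoped Matrix.Norms.L2Operator

lemma enorm2_nonneg {ι : Type*} [Fintype ι] (v : ι → ℝ) : 0 ≤ enorm2 v :=
  Real.sqrt_nonneg _

lemma enorm2_eq_norm_toLp {ι : Type*} [Fintype ι] (v : ι → ℝ) :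
    enorm2 v = ‖WithLp.toLp 2 v‖ := by
  simp [enorm2, EuclideanSpace.norm_eq]

lemma sigmaMax_eq_l2_opNorm {m k : Type*} [Fintype m] [Fintype k] [DecidableEq k]
    (U : Matrix m k ℝ) : sigmaMax U = ‖U‖ := by
  rw [Matrix.l2_opNorm_def, ← ContinuousLinearMap.sSup_sphere_eq_norm]
  refine congrArg sSup (Set.ext fun c => ?_)
  simp only [Set.mem_ofPred_eq, Set.mem_image, mem_sphere_iff_norm, sub_zero, enorm2_eq_norm_toLp]
  constructor
  · rintro ⟨x, hx, rfl⟩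
    exact ⟨WithLp.toLp 2 x, hx, by simp⟩
  · rintro ⟨x, hx, rfl⟩
    exact ⟨x.ofLp, hx, by simp [Matrix.toLpLin_apply]⟩

lemma l2_opNorm_le_of_enorm2_mulVec_le {m k : Type*} [Fintype m] [Fintype k] [DecidableEq k]
    {M : Matrix m k ℝ} {c : ℝ} (hc : 0 ≤ c) (h : ∀ x, enorm2 (M *ᵥ x) ≤ c * enorm2 x) :
    ‖M‖ ≤ c := by
  rw [Matrix.l2_opNorm_def]
  refine ContinuousLinearMap.opNorm_le_bound _ hc fun x => ?_
  simpa [Matrix.toLpLin_apply, enorm2_eq_norm_toLp] using h x.ofLp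

lemma opApply_vecMulVec_single {n d : ℕ} (A : Fin n → Matrix (Fin d) (Fin d) ℝ) (j : Fin d)
    (w : Fin d → ℝ) :
    opApply A (Matrix.vecMulVec (Pi.single j 1) w) = rowStack A j *ᵥ w := by
  ext i
  simp [opApply, mdot, Matrix.vecMulVec_apply, Pi.single_apply, rowStack, Matrix.mulVec, dotProduct]

lemma frob_vecMulVec_single {m k : Type*} [Fintype m] [DecidableEq m] [Fintype k] (j : m)
    (w : k → ℝ) : frob (Matrix.vecMulVec (Pi.single j 1) w) = enorm2 w := by
  simp [frob, enorm2, Matrix.vecMulVec_apply, Pi.single_apply]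

namespace RSmooth

variable {n d : ℕ} {A : Fin n → Matrix (Fin d) (Fin d) ℝ} {β : ℝ}

lemma enorm2_rowStack_mulVec_sq_le (hSm : RSmooth A 1 β) (j : Fin d) (w : Fin d → ℝ) :
    (1 / (n : ℝ)) * enorm2 (rowStack A j *ᵥ w) ^ 2 ≤ β * enorm2 w ^ 2 := by
  have h := hSm _ (Matrix.rank_vecMulVec_le (Pi.single j 1) w)
  rwa [opApply_vecMulVec_single, frob_vecMulVec_single] at h

lemma nonneg (hSm : RSmooth A 1 β) (j : Fin d) : 0 ≤ β := by
  have h := hSm.enorm2_rowStack_mulVec_sq_le j (Pi.single j 1)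
  have h_single : enorm2 (Pi.single j (1 : ℝ)) = 1 := by simp [enorm2, Pi.single_apply]
  calc 0 ≤ (1 / (n : ℝ)) * enorm2 (rowStack A j *ᵥ Pi.single j 1) ^ 2 := by positivity
    _ ≤ β := by simpa [h_single] using h

lemma l2_opNorm_smul_rowStack_le (hSm : RSmooth A 1 β) (j : Fin d) :
    ‖√(1 / (n : ℝ)) • rowStack A j‖ ≤ √β := by
  refine l2_opNorm_le_of_enorm2_mulVec_le (Real.sqrt_nonneg _) fun w => ?_
  rw [Matrix.smul_mulVec, enorm2_eq_norm_toLp, WithLp.toLp_smul, norm_smul, ← enorm2_eq_norm_toLp,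
    Real.norm_of_nonneg (Real.sqrt_nonneg _)]
  calc √(1 / (n : ℝ)) * enorm2 (rowStack A j *ᵥ w)
      = √((1 / (n : ℝ)) * enorm2 (rowStack A j *ᵥ w) ^ 2) := by
        rw [Real.sqrt_mul (by positivity), Real.sqrt_sq (enorm2_nonneg _)]
    _ ≤ √(β * enorm2 w ^ 2) := Real.sqrt_le_sqrt (hSm.enorm2_rowStack_mulVec_sq_le j w)
    _ = √β * enorm2 w := by rw [Real.sqrt_mul' _ (sq_nonneg _), Real.sqrt_sq (enorm2_nonneg _)]

end RSmooth

lemma psiMat_eq_transpose_mul_self {n d r : ℕ} (A : Fin n → Matrix (Fin d) (Fin d) ℝ)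
    (U : Matrix (Fin d) (Fin r) ℝ) (j : Fin d) :
    PsiMat A U j =
      ((√(1 / (n : ℝ)) • rowStack A j) * U)ᵀ * ((√(1 / (n : ℝ)) • rowStack A j) * U) := by
  rw [Matrix.transpose_mul, Matrix.transpose_smul, Matrix.mul_assoc, ← Matrix.mul_assoc _ _ U,
    Matrix.smul_mul, Matrix.mul_smul, smul_smul, Real.mul_self_sqrt (by positivity), PsiMat,
    Matrix.mul_assoc]

theorem stmt_18_general {d r n : ℕ}
    (A : Fin n → Matrix (Fin d) (Fin d) ℝ) (β : ℝ)
    (hSm : RSmooth A 1 β)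
    (Ustar : Matrix (Fin d) (Fin r) ℝ) (j : Fin d) :
    sigmaMax (PsiMat A Ustar j) ≤ β * sigmaMax Ustar ^ 2 := by
  set B := √(1 / (n : ℝ)) • rowStack A j
  have hB : ‖B * Ustar‖ ≤ √β * ‖Ustar‖ :=
    (Matrix.l2_opNorm_mul _ _).trans (by gcongr; exact hSm.l2_opNorm_smul_rowStack_le j)
  rw [psiMat_eq_transpose_mul_self, sigmaMax_eq_l2_opNorm, sigmaMax_eq_l2_opNorm,
    ← Matrix.conjTranspose_eq_transpose_of_trivial, Matrix.l2_opNorm_conjTranspose_mul_self]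
  calc ‖B * Ustar‖ * ‖B * Ustar‖ ≤ (√β * ‖Ustar‖) * (√β * ‖Ustar‖) :=
        mul_le_mul hB hB (norm_nonneg _) (by positivity)
    _ = β * ‖Ustar‖ ^ 2 := by rw [mul_mul_mul_comm, Real.mul_self_sqrt (hSm.nonneg j), sq]

/-- operator-norm bound `‖Ψ_j‖ ≤ β σ₁(U*)²` under 1-smoothness(β). -/
theorem stmt_18 {d r n : ℕ} (hn : 0 < n)
    (A : Fin n → Matrix (Fin d) (Fin d) ℝ) (β : ℝ)
    (hSm : RSmooth A 1 β)
    (Ustar : Matrix (Fin d) (Fin r) ℝ) (j : Fin d) :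
    sigmaMax (PsiMat A Ustar j) ≤ β * sigmaMax Ustar ^ 2 :=
  stmt_18_general A β hSm Ustar j
end
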